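/- Haussler's sample complexity bound (the form quoted in Theorem 3.3): let H be a nonempty finite set of measurable hypotheses h : X → Bool, let ε > 0 with ε ≤ 1, let δ be a real number with 0 < δ ≤ 1, and let m : ℕ satisfy (m : ℝ) ≥ (Real.log |H| + Real.log (1/δ)) / ε. Then the probability under μ^{⊗m} of the event {s : Fin m → X | ∃ h ∈ H, (∀ i, h (s i) = c (s i)) ∧ err(h) > ε} is at most δ; i.e., with probability at least 1 − δ, every hypothesis in H consistent with m i.i.d. samples has true error at most ε. -/

import Mathlib

/-! A hypothesis with true error `e` is consistent with `m` independent samples with probability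
`(1 - e) ^ m ≤ exp (-e m)`. A union bound over the hypotheses of error greater than `ε` bounds the
probability of the bad event by `|H| exp (-ε m)`, and the choice of `m` makes this at most `δ`. -/

open MeasureTheory

/-- True error of hypothesis `h` with respect to target concept `c` under distribution `μ`. -/
noncomputable def trueErr {X : Type*} [MeasurableSpace X]
    (μ : Measure X) (c h : X → Bool) : ℝ :=
  (μ {x | h x ≠ c x}).toReal

section ConsistentSample

variable {X : Type*} [MeasurableSpace X] (μ : Measure X) [IsProbabilityMeasure μ]

lemma measureReal_agree_eq_one_sub_trueErr {c h : X → Bool} (hc : Measurable c)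
    (hh : Measurable h) : μ.real {x | h x = c x} = 1 - trueErr μ c h := by
  have hdisagree : MeasurableSet {x | h x ≠ c x} := (measurableSet_eq_fun hh hc).compl
  rw [trueErr, ← measureReal_def]
  simpa only [Set.compl_ofPred, not_not] using probReal_compl_eq_one_sub (μ := μ) hdisagree

lemma measureReal_pi_consistent (m : ℕ) {c h : X → Bool} (hc : Measurable c)
    (hh : Measurable h) :
    (Measure.pi fun _ : Fin m => μ).real {s | ∀ i, h (s i) = c (s i)} =
      (1 - trueErr μ c h) ^ m := by
  have hpi : {s : Fin m → X | ∀ i, h (s i) = c (s i)} =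
      Set.univ.pi fun _ => {x | h x = c x} := by
    ext s
    simp only [Set.mem_ofPred_eq, Set.mem_univ_pi]
  rw [hpi, measureReal_def, Measure.pi_pi, ENNReal.toReal_prod, Finset.prod_const,
    Finset.card_univ, Fintype.card_fin, ← measureReal_def,
    measureReal_agree_eq_one_sub_trueErr μ hc hh]

lemma measureReal_pi_consistent_le_exp (m : ℕ) {c h : X → Bool} (hc : Measurable c)
    (hh : Measurable h) {ε : ℝ} (hε : ε ≤ trueErr μ c h) :
    (Measure.pi fun _ : Fin m => μ).real {s | ∀ i, h (s i) = c (s i)} ≤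
      Real.exp (-(ε * m)) := by
  have hagree_nonneg : 0 ≤ 1 - trueErr μ c h := by
    rw [← measureReal_agree_eq_one_sub_trueErr μ hc hh]
    exact measureReal_nonneg
  calc (Measure.pi fun _ : Fin m => μ).real {s | ∀ i, h (s i) = c (s i)}
      = (1 - trueErr μ c h) ^ m := measureReal_pi_consistent μ m hc hh
    _ ≤ Real.exp (-trueErr μ c h) ^ m :=
      pow_le_pow_left₀ hagree_nonneg (Real.one_sub_le_exp_neg _) m
    _ ≤ Real.exp (-ε) ^ m := by gcongr
    _ = Real.exp (-(ε * m)) := by rw [← Real.exp_nat_mul]; ring_nf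

end ConsistentSample

lemma natCast_mul_exp_neg_le {n m : ℕ} {ε δ : ℝ} (hε : 0 < ε) (hδ : 0 < δ)
    (hm : (Real.log n + Real.log (1 / δ)) / ε ≤ m) :
    n * Real.exp (-(ε * m)) ≤ δ := by
  rcases Nat.eq_zero_or_pos n with rfl | hn
  · simpa using hδ.le
  have hn' : (0 : ℝ) < n := by exact_mod_cast hn
  have hlog : Real.log n + Real.log (1 / δ) ≤ ε * m := by
    rwa [div_le_iff₀ hε, mul_comm] at hm
  calc n * Real.exp (-(ε * m))
      ≤ n * Real.exp (-(Real.log n + Real.log (1 / δ))) := by gcongr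
    _ = δ := by
      rw [neg_add, Real.exp_add, Real.exp_neg, Real.exp_neg, Real.exp_log hn',
        Real.exp_log (by positivity)]
      field_simp

theorem haussler_sample_complexity_general {X : Type*} [MeasurableSpace X]
    (μ : Measure X) [IsProbabilityMeasure μ]
    (c : X → Bool) (hc : Measurable c)
    (H : Finset (X → Bool)) (hmeas : ∀ h ∈ H, Measurable h)
    (ε : ℝ) (hε0 : 0 < ε)
    (δ : ℝ) (hδ0 : 0 < δ) (m : ℕ)
    (hm : (Real.log (H.card : ℝ) + Real.log (1 / δ)) / ε ≤ (m : ℝ)) :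
    ((Measure.pi fun _ : Fin m => μ)
        {s : Fin m → X | ∃ h ∈ H, (∀ i : Fin m, h (s i) = c (s i)) ∧ ε < trueErr μ c h}).toReal
      ≤ δ := by
  set bad := H.filter fun h => ε < trueErr μ c h
  have hcover : {s : Fin m → X | ∃ h ∈ H, (∀ i, h (s i) = c (s i)) ∧ ε < trueErr μ c h} ⊆
      ⋃ h ∈ bad, {s | ∀ i, h (s i) = c (s i)} := by
    rintro s ⟨h, hH, hconsistent, herr⟩
    exact Set.mem_biUnion (Finset.mem_filter.2 ⟨hH, herr⟩) hconsistent
  calc _ ≤ (Measure.pi fun _ : Fin m => μ).real (⋃ h ∈ bad, {s | ∀ i, h (s i) = c (s i)}) :=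
        measureReal_mono hcover (measure_ne_top _ _)
    _ ≤ ∑ h ∈ bad, (Measure.pi fun _ : Fin m => μ).real {s | ∀ i, h (s i) = c (s i)} :=
        measureReal_biUnion_finset_le _ _
    _ ≤ ∑ _h ∈ bad, Real.exp (-(ε * m)) := by
        refine Finset.sum_le_sum fun h hh => ?_
        obtain ⟨hH, herr⟩ := Finset.mem_filter.1 hh
        exact measureReal_pi_consistent_le_exp μ m hc (hmeas h hH) herr.le
    _ ≤ H.card * Real.exp (-(ε * m)) := by
        rw [Finset.sum_const, nsmul_eq_mul]
        gcongr
        exact Finset.filter_subset _ _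
    _ ≤ δ := natCast_mul_exp_neg_le hε0 hδ0 hm

/-- Haussler's sample complexity bound (the form quoted in Theorem 3.3): if
`m ≥ (ln |H| + ln (1/δ)) / ε`, then with probability at least `1 − δ` over `m` i.i.d.
samples, every hypothesis in `H` consistent with the samples has true error at most `ε`. -/
theorem haussler_sample_complexity {X : Type*} [MeasurableSpace X]
    (μ : Measure X) [IsProbabilityMeasure μ]
    (c : X → Bool) (hc : Measurable c)
    (H : Finset (X → Bool)) (hH : H.Nonempty) (hmeas : ∀ h ∈ H, Measurable h)
    (ε : ℝ) (hε0 : 0 < ε) (hε1 : ε ≤ 1)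
    (δ : ℝ) (hδ0 : 0 < δ) (hδ1 : δ ≤ 1) (m : ℕ)
    (hm : (Real.log (H.card : ℝ) + Real.log (1 / δ)) / ε ≤ (m : ℝ)) :
    ((Measure.pi fun _ : Fin m => μ)
        {s : Fin m → X | ∃ h ∈ H, (∀ i : Fin m, h (s i) = c (s i)) ∧ ε < trueErr μ c h}).toReal
      ≤ δ :=
  haussler_sample_complexity_general μ c hc H hmeas ε hε0 δ hδ0 m hm
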